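/- arXiv:1811.02221 — 4 statements merged into one kernel-verified Lean document; each statement's English description precedes it below -/
import Mathlib

section
/- Let B be a building set on [n+1] and S ∈ B. Then the contraction B/S = { T ⊆ [n+1] \ S : T ∈ B, or T ⊔ S ∈ B } is a building set on the set [n+1] \ S. -/
/-!
A set `T` lies in the contraction `B / S` exactly when some member `U` of `B` is squeezed between
`T` and `T ∪ S`: if `U` misses `S` then `U = T`, and otherwise `U ∪ S = T ∪ S` lies in `B`.
This reformulation is stable under unions of intersecting sets, since `U₁ ∪ U₂` is squeezed
between `T₁ ∪ T₂` and `T₁ ∪ T₂ ∪ S`.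
-/

/-- A building set on the vertex set `V`. -/
def IsBuildingSet (V : Finset ℕ) (B : Set (Finset ℕ)) : Prop :=
  (∀ S ∈ B, S.Nonempty ∧ S ⊆ V) ∧
  (∀ i ∈ V, ({i} : Finset ℕ) ∈ B) ∧
  (∀ S₁ ∈ B, ∀ S₂ ∈ B, (S₁ ∩ S₂).Nonempty → S₁ ∪ S₂ ∈ B)

def buildingContraction (V : Finset ℕ) (B : Set (Finset ℕ)) (S : Finset ℕ) : Set (Finset ℕ) :=
  {T | T.Nonempty ∧ T ⊆ V \ S ∧ (T ∈ B ∨ T ∪ S ∈ B)}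

namespace IsBuildingSet

variable {V : Finset ℕ} {B : Set (Finset ℕ)} {S T T₁ T₂ : Finset ℕ}

theorem union_mem (hB : IsBuildingSet V B) (h₁ : T₁ ∈ B) (h₂ : T₂ ∈ B)
    (h : (T₁ ∩ T₂).Nonempty) : T₁ ∪ T₂ ∈ B :=
  hB.2.2 T₁ h₁ T₂ h₂ h

theorem mem_or_union_mem_iff (hB : IsBuildingSet V B) (hS : S ∈ B) :
    (T ∈ B ∨ T ∪ S ∈ B) ↔ ∃ U ∈ B, T ⊆ U ∧ U ⊆ T ∪ S := by
  constructor
  · rintro (hT | hTS)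
    · exact ⟨T, hT, subset_rfl, Finset.subset_union_left⟩
    · exact ⟨T ∪ S, hTS, Finset.subset_union_left, subset_rfl⟩
  · rintro ⟨U, hU, hTU, hUTS⟩
    by_cases hUS : (U ∩ S).Nonempty
    · have hUS_eq : U ∪ S = T ∪ S :=
        subset_antisymm (Finset.union_subset hUTS Finset.subset_union_right)
          (Finset.union_subset_union hTU subset_rfl)
      exact Or.inr (hUS_eq ▸ hB.union_mem hU hS hUS)
    · have hdisj : Disjoint U S := by
        rwa [Finset.disjoint_iff_inter_eq_empty, ← Finset.not_nonempty_iff_eq_empty]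
      have hUT : U = T :=
        subset_antisymm (Disjoint.left_le_of_le_sup_right hUTS hdisj) hTU
      exact Or.inl (hUT ▸ hU)

theorem union_mem_or_union_union_mem (hB : IsBuildingSet V B) (hS : S ∈ B)
    (h₁ : T₁ ∈ B ∨ T₁ ∪ S ∈ B) (h₂ : T₂ ∈ B ∨ T₂ ∪ S ∈ B) (h : (T₁ ∩ T₂).Nonempty) :
    T₁ ∪ T₂ ∈ B ∨ T₁ ∪ T₂ ∪ S ∈ B := by
  rw [hB.mem_or_union_mem_iff hS] at h₁ h₂ ⊢
  obtain ⟨U₁, hU₁, hTU₁, hUTS₁⟩ := h₁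
  obtain ⟨U₂, hU₂, hTU₂, hUTS₂⟩ := h₂
  refine ⟨U₁ ∪ U₂, hB.union_mem hU₁ hU₂ (h.mono (Finset.inter_subset_inter hTU₁ hTU₂)),
    Finset.union_subset_union hTU₁ hTU₂, ?_⟩
  calc U₁ ∪ U₂ ⊆ (T₁ ∪ S) ∪ (T₂ ∪ S) := Finset.union_subset_union hUTS₁ hUTS₂
    _ = T₁ ∪ T₂ ∪ S := by rw [Finset.union_union_union_comm, Finset.union_self]

theorem contraction (hB : IsBuildingSet V B) (hS : S ∈ B) :
    IsBuildingSet (V \ S) (buildingContraction V B S) := by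
  refine ⟨fun T hT => ⟨hT.1, hT.2.1⟩, fun i hi => ?_, ?_⟩
  · exact ⟨Finset.singleton_nonempty i, Finset.singleton_subset_iff.mpr hi,
      Or.inl (hB.2.1 i (Finset.mem_sdiff.mp hi).1)⟩
  · rintro T₁ ⟨hne₁, hsub₁, h₁⟩ T₂ ⟨-, hsub₂, h₂⟩ h
    exact ⟨hne₁.mono Finset.subset_union_left, Finset.union_subset hsub₁ hsub₂,
      hB.union_mem_or_union_union_mem hS h₁ h₂ h⟩

end IsBuildingSet

theorem contraction_isBuildingSet (n : ℕ) (B : Set (Finset ℕ))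
    (hB : IsBuildingSet (Finset.Icc 1 (n + 1)) B) (S : Finset ℕ) (hS : S ∈ B) :
    IsBuildingSet (Finset.Icc 1 (n + 1) \ S)
      {T | T.Nonempty ∧ T ⊆ Finset.Icc 1 (n + 1) \ S ∧ (T ∈ B ∨ T ∪ S ∈ B)} :=
  hB.contraction hS
end

section
/- Let B(P,n) (n ≥ 2) be the building set on [n+1] consisting of all singletons, all sets of the form {1,2} ∪ T with T ⊆ {3,...,n+1}, all sets {1} ∪ T with ∅ ≠ T ⊆ {3,...,n}, and [n+1]. Then every element S of B(P,n) with |S| ≥ 2 can be written as a disjoint union S = S₁ ⊔ S₂ with S₁, S₂ ∈ B(P,n). -/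
/-- The building set `B(P,n)` on `[n+1]` defining the family `𝒫_Mas`:
all singletons, all sets `{1,2} ∪ T` with `T ⊆ {3,…,n+1}`,
all sets `{1} ∪ T` with `∅ ≠ T ⊆ {3,…,n}`, and `[n+1]` itself. -/
def BP (n : ℕ) : Set (Finset ℕ) :=
  {S | ∃ i ∈ Finset.Icc 1 (n + 1), S = {i}} ∪
  {S | ∃ T ⊆ Finset.Icc 3 (n + 1), S = {1, 2} ∪ T} ∪
  {S | ∃ T : Finset ℕ, T ⊆ Finset.Icc 3 n ∧ T.Nonempty ∧ S = {1} ∪ T} ∪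
  {Finset.Icc 1 (n + 1)}

/-! Every non-singleton `S ∈ B(P,n)` has a point `t` such that both `{t}` and `S \ {t}` lie in
`B(P,n)`: remove a point of `T` from `{1,2} ∪ T` or `{1} ∪ T` (when `T = ∅`, remove `2` from
`{1,2}`), and note that `[n+1] = {1,2} ∪ {3,…,n+1}`. -/

open Finset

theorem Finset.exists_disjoint_union_of_mem_of_erase {α : Type*} [DecidableEq α]
    {P : Set (Finset α)} {S : Finset α} {t : α} (ht : t ∈ S) (hsing : {t} ∈ P)
    (herase : S.erase t ∈ P) : ∃ S₁ ∈ P, ∃ S₂ ∈ P, Disjoint S₁ S₂ ∧ S = S₁ ∪ S₂ :=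
  ⟨{t}, hsing, S.erase t, herase, disjoint_singleton_left.mpr (notMem_erase t S),
    by rw [← insert_eq, insert_erase ht]⟩

namespace BP

variable {n : ℕ}

theorem singleton_mem {i : ℕ} (h1 : 1 ≤ i) (h2 : i ≤ n + 1) : ({i} : Finset ℕ) ∈ BP n :=
  Or.inl <| Or.inl <| Or.inl ⟨i, mem_Icc.mpr ⟨h1, h2⟩, rfl⟩

theorem pair_union_mem {T : Finset ℕ} (hT : T ⊆ Icc 3 (n + 1)) : {1, 2} ∪ T ∈ BP n :=
  Or.inl <| Or.inl <| Or.inr ⟨T, hT, rfl⟩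

theorem one_union_mem {T : Finset ℕ} (hT : T ⊆ Icc 3 n) : {1} ∪ T ∈ BP n := by
  rcases T.eq_empty_or_nonempty with rfl | hne
  · exact singleton_mem le_rfl (by omega)
  · exact Or.inl <| Or.inr ⟨T, hT, hne, rfl⟩

theorem union_erase_eq_of_lt_three {A T : Finset ℕ} {t m : ℕ} (hA : ∀ a ∈ A, a < 3)
    (hT : T ⊆ Icc 3 m) (ht : t ∈ T) : (A ∪ T).erase t = A ∪ T.erase t := by
  have htA : t ∉ A := fun h => by have := hA t h; have := (mem_Icc.mp (hT ht)).1; omega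
  rw [erase_union_distrib, erase_eq_of_notMem htA]

theorem Icc_one_eq_pair_union (hn : 1 ≤ n) : Icc 1 (n + 1) = {1, 2} ∪ Icc 3 (n + 1) := by
  ext a
  simp only [mem_union, mem_insert, mem_singleton, mem_Icc]
  omega

theorem exists_disjoint_union_pair_union (hn : 1 ≤ n) {T : Finset ℕ}
    (hT : T ⊆ Icc 3 (n + 1)) :
    ∃ S₁ ∈ BP n, ∃ S₂ ∈ BP n, Disjoint S₁ S₂ ∧ {1, 2} ∪ T = S₁ ∪ S₂ := by
  rcases T.eq_empty_or_nonempty with rfl | ⟨t, ht⟩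
  · refine exists_disjoint_union_of_mem_of_erase (t := 2) (by simp)
      (singleton_mem (by omega) (by omega)) ?_
    rw [show ({1, 2} ∪ ∅ : Finset ℕ).erase 2 = {1} by decide]
    exact singleton_mem le_rfl (by omega)
  · have htI := mem_Icc.mp (hT ht)
    refine exists_disjoint_union_of_mem_of_erase (mem_union_right _ ht)
      (singleton_mem (by omega) htI.2) ?_
    rw [union_erase_eq_of_lt_three (by simp) hT ht]
    exact pair_union_mem ((erase_subset t T).trans hT)

theorem exists_disjoint_union_one_union {T : Finset ℕ} (hT : T ⊆ Icc 3 n) (hne : T.Nonempty) :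
    ∃ S₁ ∈ BP n, ∃ S₂ ∈ BP n, Disjoint S₁ S₂ ∧ {1} ∪ T = S₁ ∪ S₂ := by
  obtain ⟨t, ht⟩ := hne
  have htI := mem_Icc.mp (hT ht)
  refine exists_disjoint_union_of_mem_of_erase (mem_union_right _ ht)
    (singleton_mem (by omega) (by omega)) ?_
  rw [union_erase_eq_of_lt_three (by simp) hT ht]
  exact one_union_mem ((erase_subset t T).trans hT)

end BP

/-- Flagness criterion: every non-singleton element of `B(P,n)` is a disjoint union of
two elements of `B(P,n)`. -/
theorem BP_flag (n : ℕ) (hn : 2 ≤ n) (S : Finset ℕ) (hS : S ∈ BP n) (hcard : 2 ≤ S.card) :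
    ∃ S₁ ∈ BP n, ∃ S₂ ∈ BP n, Disjoint S₁ S₂ ∧ S = S₁ ∪ S₂ := by
  rcases hS with ((⟨i, -, rfl⟩ | ⟨T, hT, rfl⟩) | ⟨T, hT, hne, rfl⟩) | rfl
  · simp at hcard
  · exact BP.exists_disjoint_union_pair_union (by omega) hT
  · exact BP.exists_disjoint_union_one_union hT hne
  · rw [BP.Icc_one_eq_pair_union (by omega)]
    exact BP.exists_disjoint_union_pair_union (by omega) subset_rfl
end

section
/- Let B(Γ,n) (n ≥ 2) be the collection of subsets of [n+1] consisting of all singletons, all subsets of {1,...,n} of cardinality at least 2, all sets of the form {1} ∪ T ∪ {n+1} with T ⊆ {2,...,n}, and [n+1]. Then B(Γ,n) is a connected building set on [n+1], and every S ∈ B(Γ,n) with |S| ≥ 2 decomposes as a disjoint union of two elements of B(Γ,n). -/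
/-- The building set `B(Γ,n)` on `[n+1]`: all singletons, all subsets of `[n]` of
cardinality at least 2, all sets `{1} ∪ T ∪ {n+1}` with `T ⊆ {2,…,n}`, and `[n+1]`. -/
def BG (n : ℕ) : Set (Finset ℕ) :=
  {S | ∃ i ∈ Finset.Icc 1 (n + 1), S = {i}} ∪
  {S | S ⊆ Finset.Icc 1 n ∧ 2 ≤ S.card} ∪
  {S | ∃ T ⊆ Finset.Icc 2 n, S = {1} ∪ T ∪ {n + 1}} ∪
  {Finset.Icc 1 (n + 1)}

/-!
`BG n` consists exactly of the nonempty subsets of `[n+1]` that, when they contain `n + 1` and are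
not `{n + 1}`, also contain `1`. This condition is visibly stable under unions of intersecting
sets, and a member with at least two elements splits as `{x} ⊔ (S \ {x})`, taking `x = n + 1`
when `n + 1 ∈ S` and any `x ∈ S` otherwise.
-/

open Finset

theorem mem_BG_iff {n : ℕ} {S : Finset ℕ} :
    S ∈ BG n ↔ S.Nonempty ∧ S ⊆ Icc 1 (n + 1) ∧ (n + 1 ∈ S → S = {n + 1} ∨ 1 ∈ S) := by
  constructor
  · rintro (((⟨i, hi, rfl⟩ | ⟨hS, hcard⟩) | ⟨T, hT, rfl⟩) | rfl)
    · simp_all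
    · refine ⟨card_pos.mp (by omega), hS.trans (Icc_subset_Icc_right (by omega)), fun h => ?_⟩
      simpa using hS h
    · refine ⟨by simp, fun x hx => ?_, fun _ => Or.inr (by simp)⟩
      simp only [mem_union, mem_singleton] at hx
      rcases hx with (rfl | hx) | rfl
      · simp
      · exact Icc_subset_Icc (by omega) (by omega) (hT hx)
      · simp
    · exact ⟨by simp, subset_rfl, fun _ => Or.inr (by simp)⟩
  · rintro ⟨hne, hsub, htop⟩
    by_cases htopS : n + 1 ∈ S
    · rcases htop htopS with rfl | h1
      · exact Or.inl (Or.inl (Or.inl ⟨n + 1, by simp, rfl⟩))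
      · refine Or.inl (Or.inr ⟨(S.erase 1).erase (n + 1), fun x hx => ?_, ?_⟩)
        · have := hsub (mem_of_mem_erase (mem_of_mem_erase hx))
          simp only [mem_erase, mem_Icc] at hx this ⊢
          omega
        · ext x
          simp only [mem_union, mem_singleton, mem_erase]
          grind
    · have hS : S ⊆ Icc 1 n := fun x hx => by
        have := hsub hx
        simp only [mem_Icc] at this ⊢
        grind
      obtain hcard | hcard := Nat.lt_or_ge S.card 2
      · obtain ⟨i, rfl⟩ := card_eq_one.1 (le_antisymm (by omega) hne.card_pos)
        exact Or.inl (Or.inl (Or.inl ⟨i, hsub (mem_singleton_self i), rfl⟩))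
      · exact Or.inl (Or.inl (Or.inr ⟨hS, hcard⟩))

theorem singleton_mem_BG {n i : ℕ} (hi : i ∈ Icc 1 (n + 1)) : {i} ∈ BG n :=
  Or.inl (Or.inl (Or.inl ⟨i, hi, rfl⟩))

theorem union_mem_BG {n : ℕ} {S₁ S₂ : Finset ℕ} (h₁ : S₁ ∈ BG n) (h₂ : S₂ ∈ BG n)
    (h : (S₁ ∩ S₂).Nonempty) : S₁ ∪ S₂ ∈ BG n := by
  rw [mem_BG_iff] at h₁ h₂ ⊢
  obtain ⟨hne₁, hsub₁, htop₁⟩ := h₁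
  obtain ⟨hne₂, hsub₂, htop₂⟩ := h₂
  refine ⟨hne₁.mono subset_union_left, union_subset hsub₁ hsub₂, fun htop => ?_⟩
  obtain ⟨x, hx⟩ := h
  rw [mem_inter] at hx
  rw [mem_union] at htop ⊢
  rcases htop with htop | htop
  · rcases htop₁ htop with rfl | h1
    · rcases htop₂ (mem_singleton.1 hx.1 ▸ hx.2) with rfl | h1
      · simp
      · exact Or.inr (Or.inr h1)
    · exact Or.inr (Or.inl h1)
  · rcases htop₂ htop with rfl | h1
    · rcases htop₁ (mem_singleton.1 hx.2 ▸ hx.1) with rfl | h1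
      · simp
      · exact Or.inr (Or.inl h1)
    · exact Or.inr (Or.inr h1)

theorem exists_singleton_and_erase_mem_BG {n : ℕ} {S : Finset ℕ} (hS : S ∈ BG n)
    (hcard : 2 ≤ S.card) : ∃ x ∈ S, {x} ∈ BG n ∧ S.erase x ∈ BG n := by
  obtain ⟨hne, hsub, -⟩ := mem_BG_iff.1 hS
  have erase_mem {x} (hx : x ∈ S) (htop : n + 1 ∉ S.erase x) :
      {x} ∈ BG n ∧ S.erase x ∈ BG n := by
    refine ⟨singleton_mem_BG (hsub hx), mem_BG_iff.2 ⟨?_, (erase_subset x S).trans hsub,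
      fun h => absurd h htop⟩⟩
    rw [← card_pos, card_erase_of_mem hx]
    omega
  by_cases htop : n + 1 ∈ S
  · exact ⟨n + 1, htop, erase_mem htop (notMem_erase _ _)⟩
  · obtain ⟨x, hx⟩ := hne
    exact ⟨x, hx, erase_mem hx fun h => htop (mem_of_mem_erase h)⟩

theorem BG_buildingSet_and_flag_general (n : ℕ) :
    (IsBuildingSet (Finset.Icc 1 (n + 1)) (BG n) ∧ Finset.Icc 1 (n + 1) ∈ BG n) ∧
    ∀ S ∈ BG n, 2 ≤ S.card →
      ∃ S₁ ∈ BG n, ∃ S₂ ∈ BG n, Disjoint S₁ S₂ ∧ S = S₁ ∪ S₂ := by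
  refine ⟨⟨⟨fun S hS => ?_, fun i hi => singleton_mem_BG hi,
    fun S₁ h₁ S₂ h₂ h => union_mem_BG h₁ h₂ h⟩, Or.inr rfl⟩, fun S hS hcard => ?_⟩
  · obtain ⟨hne, hsub, -⟩ := mem_BG_iff.1 hS
    exact ⟨hne, hsub⟩
  · obtain ⟨x, hx, hsingle, herase⟩ := exists_singleton_and_erase_mem_BG hS hcard
    refine ⟨{x}, hsingle, S.erase x, herase, disjoint_singleton_left.2 (notMem_erase x S), ?_⟩
    rw [← insert_eq, insert_erase hx]

theorem BG_buildingSet_and_flag (n : ℕ) (hn : 2 ≤ n) :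
    (IsBuildingSet (Finset.Icc 1 (n + 1)) (BG n) ∧ Finset.Icc 1 (n + 1) ∈ BG n) ∧
    ∀ S ∈ BG n, 2 ≤ S.card →
      ∃ S₁ ∈ BG n, ∃ S₂ ∈ BG n, Disjoint S₁ S₂ ∧ S = S₁ ∪ S₂ :=
  BG_buildingSet_and_flag_general n
end

section
/- In the differential ring of polytopes with d St ⁿ = n·Stⁿ⁻¹ + Σ_{s=0}^{n-1} C(n,s)·Stˢ × Pe^{n−s−1}, the generating series St(x) = Σ_{s≥0} Stˢ xˢ/s! and Pe(x) = Σ_{s≥0} Peˢ x^{s+1}/(s+1)! satisfy d St(x) = (x + Pe(x))·St(x). -/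
open PowerSeries

/-!
Both sides are exponential generating functions, and the product of exponential generating
functions is the exponential generating function of the binomial convolution. Multiplying by `x`
turns `(aₙ)` into `(n·aₙ₋₁)`, and `Pe(x)` is the exponential generating function of the shifted
sequence `(0, Pe⁰, Pe¹, …)`, so the right-hand side has `n`-th coefficient `1/n!` times
`n·Stⁿ⁻¹ + Σ_{s<n} C(n,s)·Stˢ·Pe^{n-s-1}`, which is `d Stⁿ` by the boundary formula.
-/

theorem natCast_mul_eq_smul {A : Type*} [Semiring A] [Algebra ℚ A] (n : ℕ) (x : A) :
    (n : A) * x = (n : ℚ) • x := by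
  rw [Nat.cast_smul_eq_nsmul, nsmul_eq_mul]

namespace PowerSeries

variable {A : Type*} [Semiring A] [Algebra ℚ A]

noncomputable def egf (a : ℕ → A) : A⟦X⟧ :=
  mk fun k => (k.factorial : ℚ)⁻¹ • a k

theorem coeff_egf (a : ℕ → A) (n : ℕ) : coeff n (egf a) = (n.factorial : ℚ)⁻¹ • a n :=
  coeff_mk _ _

theorem egf_add (a b : ℕ → A) : egf (a + b) = egf a + egf b := by
  ext n
  simp only [coeff_egf, map_add, Pi.add_apply, smul_add]

theorem X_mul_egf (a : ℕ → A) : X * egf a = egf fun n => (n : A) * a (n - 1) := by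
  ext (_ | n)
  · simp [coeff_egf]
  · rw [coeff_succ_X_mul, coeff_egf, coeff_egf, Nat.add_sub_cancel, natCast_mul_eq_smul,
      smul_smul, Nat.factorial_succ, Nat.cast_mul, mul_inv, mul_comm, ← mul_assoc,
      mul_inv_cancel₀ (by positivity), one_mul]

theorem egf_mul (a b : ℕ → A) :
    egf a * egf b =
      egf fun n => ∑ s ∈ Finset.range (n + 1), (n.choose s : A) * (a s * b (n - s)) := by
  ext n
  rw [coeff_mul, Finset.Nat.sum_antidiagonal_eq_sum_range_succ_mk, coeff_egf, Finset.smul_sum]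
  refine Finset.sum_congr rfl fun s hs => ?_
  have hsn : s ≤ n := Nat.lt_succ_iff.mp (Finset.mem_range.mp hs)
  rw [coeff_egf, coeff_egf, smul_mul_smul_comm, natCast_mul_eq_smul, smul_smul,
    Nat.cast_choose ℚ hsn]
  congr 1
  field_simp

end PowerSeries

theorem stellahedra_boundary_series_general (A : Type*) [CommRing A] [Algebra ℚ A]
    (d : A →+ A) (Pe St : ℕ → A)
    (hSt : ∀ n : ℕ, d (St n) = (n : A) * St (n - 1) + ∑ s ∈ Finset.range n,
        (Nat.choose n s : A) * (St s * Pe (n - s - 1))) :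
    (PowerSeries.mk fun k => (k.factorial : ℚ)⁻¹ • d (St k)) =
      (PowerSeries.X +
          PowerSeries.mk fun k =>
            if k = 0 then (0 : A) else (k.factorial : ℚ)⁻¹ • Pe (k - 1)) *
        PowerSeries.mk fun k => (k.factorial : ℚ)⁻¹ • St k := by
  set shiftedPe : ℕ → A := fun k => if k = 0 then 0 else Pe (k - 1)
  have hPe : (mk fun k => if k = 0 then (0 : A) else (k.factorial : ℚ)⁻¹ • Pe (k - 1)) =
      egf shiftedPe := by
    ext k
    by_cases hk : k = 0 <;> simp [coeff_egf, shiftedPe, hk]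
  have hconv (n : ℕ) : ∑ s ∈ Finset.range n, (n.choose s : A) * (St s * Pe (n - s - 1)) =
      ∑ s ∈ Finset.range (n + 1), (n.choose s : A) * (St s * shiftedPe (n - s)) := by
    rw [Finset.sum_range_succ, Nat.sub_self]
    simp only [shiftedPe, if_pos, mul_zero, add_zero]
    refine Finset.sum_congr rfl fun s hs => ?_
    rw [if_neg (Nat.sub_ne_zero_of_lt (Finset.mem_range.mp hs))]
  rw [hPe]
  calc egf (fun k => d (St k))
      = egf ((fun n : ℕ => (n : A) * St (n - 1)) + fun n : ℕ =>
          ∑ s ∈ Finset.range (n + 1), (n.choose s : A) * (St s * shiftedPe (n - s))) := by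
        simp only [hSt, hconv]; rfl
    _ = X * egf St + egf St * egf shiftedPe := by rw [egf_add, X_mul_egf, egf_mul]
    _ = (X + egf shiftedPe) * egf St := by ring

/-- In the (rationalized) differential ring of polytopes, given the boundary formula
`dStⁿ = n·Stⁿ⁻¹ + Σ_{s=0}^{n-1} C(n,s)·Stˢ × Pe^{n-s-1}`, the generating series
`St(x) = Σ Stˢ xˢ/s!` and `Pe(x) = Σ Peˢ x^{s+1}/(s+1)!` satisfy
`d St(x) = (x + Pe(x))·St(x)`, with `d` applied coefficientwise. -/
theorem stellahedra_boundary_series (A : Type*) [CommRing A] [Algebra ℚ A]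
    (d : A →+ A) (hLeib : ∀ a b : A, d (a * b) = d a * b + a * d b) (Pe St : ℕ → A)
    (hSt : ∀ n : ℕ, d (St n) = (n : A) * St (n - 1) + ∑ s ∈ Finset.range n,
        (Nat.choose n s : A) * (St s * Pe (n - s - 1))) :
    (PowerSeries.mk fun k => (k.factorial : ℚ)⁻¹ • d (St k)) =
      (PowerSeries.X +
          PowerSeries.mk fun k =>
            if k = 0 then (0 : A) else (k.factorial : ℚ)⁻¹ • Pe (k - 1)) *
        PowerSeries.mk fun k => (k.factorial : ℚ)⁻¹ • St k :=
  stellahedra_boundary_series_general A d Pe St hSt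
end
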